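/- Let M, N be positive natural numbers and let d be a dataset of N instances with M binary protected attributes and a binary label. Suppose every vertex (level-0 hypercube) contains at least one instance, i.e. N(v) > 0 for every v : Fin M → Bool. Then the maximum success rate per level, SR_max(K) = max over all hypercubes x of level K of SR(x), is a monotonically decreasing function of K: for every K with 1 ≤ K ≤ M, SR_max(K) ≤ SR_max(K-1). -/

import Mathlib

/-! Take a hypercube `x` of level `K` attaining `SR_max(K)` and a star `i` of `x`. Fixing
coordinate `i` to `true` resp. `false` splits `x` into two hypercubes of level `K - 1`, both
nonempty because every vertex is. So `SR(x)` is the mediant of their success rates and hence at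
most the larger of the two, which is at most `SR_max(K - 1)`. -/

/-- An attribute vector `v` belongs to the hypercube `x` if it matches all specified coordinates. -/
def Belongs {M : ℕ} (x : Fin M → Option Bool) (v : Fin M → Bool) : Prop :=
  ∀ i : Fin M, ∀ b : Bool, x i = some b → v i = b

instance {M : ℕ} (x : Fin M → Option Bool) (v : Fin M → Bool) : Decidable (Belongs x v) := by
  unfold Belongs; infer_instance

/-- The level of a hypercube: the number of its stars (unspecified coordinates). -/
def level {M : ℕ} (x : Fin M → Option Bool) : ℕ :=
  (Finset.univ.filter fun i => x i = none).card

/-- `cnt d x` = N(x): the number of instances of the dataset `d` belonging to `x`. -/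
def cnt {M N : ℕ} (d : Fin N → (Fin M → Bool) × Bool) (x : Fin M → Option Bool) : ℕ :=
  (Finset.univ.filter fun n => Belongs x (d n).1).card

/-- `cnt1 d x` = N¹(x): the number of instances belonging to `x` with label `true`. -/
def cnt1 {M N : ℕ} (d : Fin N → (Fin M → Bool) × Bool) (x : Fin M → Option Bool) : ℕ :=
  (Finset.univ.filter fun n => Belongs x (d n).1 ∧ (d n).2 = true).card

/-- The success rate SR(x) = N¹(x)/N(x). -/
def SR {M N : ℕ} (d : Fin N → (Fin M → Bool) × Bool) (x : Fin M → Option Bool) : ℚ :=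
  (cnt1 d x : ℚ) / (cnt d x : ℚ)

/-- The finset of all hypercubes of level `K`. -/
def levelSet (M K : ℕ) : Finset (Fin M → Option Bool) :=
  Finset.univ.filter fun x => level x = K

/-- SR_min(K): minimum success rate over all hypercubes of level `K`
(the level set is nonempty whenever `K ≤ M`, so the junk value `0` is never used there). -/
def SRmin {M N : ℕ} (d : Fin N → (Fin M → Bool) × Bool) (K : ℕ) : ℚ :=
  WithTop.untopD 0 (((levelSet M K).image (SR d)).min)

/-- SR_max(K): maximum success rate over all hypercubes of level `K`. -/
def SRmax {M N : ℕ} (d : Fin N → (Fin M → Bool) × Bool) (K : ℕ) : ℚ :=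
  WithBot.unbotD 0 (((levelSet M K).image (SR d)).max)

open Finset

theorem add_div_add_le_max_div {α : Type*} [Field α] [LinearOrder α] [IsStrictOrderedRing α]
    {a b c d : α} (hb : 0 < b) (hd : 0 < d) :
    (a + c) / (b + d) ≤ max (a / b) (c / d) := by
  rw [div_le_iff₀ (add_pos hb hd), mul_add]
  exact add_le_add ((div_le_iff₀ hb).1 (le_max_left _ _)) ((div_le_iff₀ hd).1 (le_max_right _ _))

section Hypercube

variable {M N : ℕ}

theorem belongs_vertex_getD (x : Fin M → Option Bool) {v : Fin M → Bool}
    (hv : Belongs (fun i => some ((x i).getD false)) v) : Belongs x v := by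
  intro i b hb
  simpa [hb] using hv i _ rfl

theorem belongs_update_iff {x : Fin M → Option Bool} {i : Fin M} (hi : x i = none) (b : Bool)
    (v : Fin M → Bool) :
    Belongs (Function.update x i (some b)) v ↔ Belongs x v ∧ v i = b := by
  constructor
  · intro h
    refine ⟨fun j c hj => h j c ?_, h i b (by simp)⟩
    rwa [Function.update_of_ne (by rintro rfl; simp [hi] at hj)]
  · rintro ⟨h, hvi⟩ j c hj
    by_cases hji : j = i
    · subst hji
      simp only [Function.update_self, Option.some.injEq] at hj
      rw [← hj, hvi]
    · exact h j c (by rwa [Function.update_of_ne hji] at hj)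

theorem level_update {x : Fin M → Option Bool} {i : Fin M} (hi : x i = none) (b : Bool) :
    level (Function.update x i (some b)) = level x - 1 := by
  have hstars : univ.filter (fun j => Function.update x i (some b) j = none)
      = (univ.filter fun j => x j = none).erase i := by
    ext j
    by_cases hji : j = i <;> simp [hji, hi]
  rw [level, level, hstars, card_erase_of_mem (by simp [hi])]

theorem levelSet_nonempty {K : ℕ} (hKM : K ≤ M) : (levelSet M K).Nonempty := by
  obtain ⟨t, -, ht⟩ := exists_subset_card_eq (s := (univ : Finset (Fin M))) (by simpa using hKM)
  refine ⟨fun j => if j ∈ t then none else some false, ?_⟩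
  have hstars : univ.filter (fun j => (if j ∈ t then none else some false : Option Bool) = none)
      = t := by
    ext j
    by_cases hj : j ∈ t <;> simp [hj]
  refine mem_filter.2 ⟨mem_univ _, ?_⟩
  rw [level, hstars, ht]

theorem card_filter_belongs_split {α : Type*} (s : Finset α) (f : α → Fin M → Bool)
    {x : Fin M → Option Bool} {i : Fin M} (hi : x i = none) :
    #(s.filter fun a => Belongs x (f a)) =
      #(s.filter fun a => Belongs (Function.update x i (some true)) (f a)) +
        #(s.filter fun a => Belongs (Function.update x i (some false)) (f a)) := by
  simp only [belongs_update_iff hi, Bool.eq_false_iff, ne_eq, ← filter_filter]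
  exact (card_filter_add_card_filter_not _).symm

variable (d : Fin N → (Fin M → Bool) × Bool)

theorem cnt_split {x : Fin M → Option Bool} {i : Fin M} (hi : x i = none) :
    cnt d x = cnt d (Function.update x i (some true)) + cnt d (Function.update x i (some false)) :=
  card_filter_belongs_split _ _ hi

theorem cnt1_split {x : Fin M → Option Bool} {i : Fin M} (hi : x i = none) :
    cnt1 d x =
      cnt1 d (Function.update x i (some true)) + cnt1 d (Function.update x i (some false)) := by
  have hlabel (y : Fin M → Option Bool) :
      cnt1 d y = #((univ.filter fun n => (d n).2 = true).filter fun n => Belongs y (d n).1) := by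
    rw [cnt1, filter_filter]
    simp only [and_comm]
  simp only [hlabel]
  exact card_filter_belongs_split _ _ hi

theorem cnt_pos (hvert : ∀ v : Fin M → Bool, 0 < cnt d (fun i => some (v i)))
    (x : Fin M → Option Bool) : 0 < cnt d x :=
  (hvert fun i => (x i).getD false).trans_le <|
    card_le_card <| monotone_filter_right _ fun _ _ => belongs_vertex_getD x

theorem SR_le_max_update (hvert : ∀ v : Fin M → Bool, 0 < cnt d (fun i => some (v i)))
    {x : Fin M → Option Bool} {i : Fin M} (hi : x i = none) :
    SR d x ≤ max (SR d (Function.update x i (some true)))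
      (SR d (Function.update x i (some false))) := by
  have hcnt (y : Fin M → Option Bool) : (0 : ℚ) < cnt d y := by exact_mod_cast cnt_pos d hvert y
  rw [SR, SR, SR, cnt_split d hi, cnt1_split d hi]
  push_cast
  exact add_div_add_le_max_div (hcnt _) (hcnt _)

theorem SR_le_SRmax {K : ℕ} {x : Fin M → Option Bool} (hx : x ∈ levelSet M K) :
    SR d x ≤ SRmax d K := by
  have hne : ((levelSet M K).image (SR d)).Nonempty := ⟨_, mem_image_of_mem _ hx⟩
  rw [SRmax, ← coe_max' hne, WithBot.unbotD_coe]
  exact le_max' _ _ (mem_image_of_mem _ hx)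

theorem exists_SR_eq_SRmax {K : ℕ} (hKM : K ≤ M) :
    ∃ x ∈ levelSet M K, SR d x = SRmax d K := by
  have hne := (levelSet_nonempty hKM).image (SR d)
  rw [SRmax, ← coe_max' hne, WithBot.unbotD_coe]
  exact mem_image.1 (max'_mem _ hne)

end Hypercube

theorem SRmax_anti_general (M N : ℕ)
    (d : Fin N → (Fin M → Bool) × Bool)
    (hvert : ∀ v : Fin M → Bool, 0 < cnt d (fun i => some (v i)))
    (K : ℕ) (hK1 : 1 ≤ K) (hKM : K ≤ M) :
    SRmax d K ≤ SRmax d (K - 1) := by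
  obtain ⟨x, hx, hSRx⟩ := exists_SR_eq_SRmax d hKM
  have hlev : level x = K := (mem_filter.1 hx).2
  obtain ⟨i, hi⟩ : ∃ i, x i = none := by
    obtain ⟨i, hi⟩ := card_pos.1 (hlev.trans_ge hK1 : 0 < level x)
    exact ⟨i, (mem_filter.1 hi).2⟩
  have hchild (b : Bool) : Function.update x i (some b) ∈ levelSet M (K - 1) := by
    simp [levelSet, level_update hi, hlev]
  rw [← hSRx]
  exact (SR_le_max_update d hvert hi).trans
    (max_le (SR_le_SRmax d (hchild true)) (SR_le_SRmax d (hchild false)))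

/-- If every vertex contains at least one instance, the maximum success
rate per level is monotonically decreasing in the level. -/
theorem SRmax_anti (M N : ℕ) (hM : 0 < M) (hN : 0 < N)
    (d : Fin N → (Fin M → Bool) × Bool)
    (hvert : ∀ v : Fin M → Bool, 0 < cnt d (fun i => some (v i)))
    (K : ℕ) (hK1 : 1 ≤ K) (hKM : K ≤ M) :
    SRmax d K ≤ SRmax d (K - 1) :=
  SRmax_anti_general M N d hvert K hK1 hKM
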